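/- For all positive integers n and p with p ≤ n, the generalized q-binomial coefficient satisfies (n choose p,n)_q = [n choose p]_q, where (n choose p,k)_q = ([n]_q/[k]_q) · Σ_{r≥0} [p choose r]_q [n-p choose r]_q [n-r-1 choose k-r-1]_q q^{(n-p)p + r(r-k)}. -/

import Mathlib

open Finset

/-- The variable `q`, as a rational function over `ℚ`. -/
noncomputable def q : RatFunc ℚ := RatFunc.X

/-- The q-integer `[m]_q = (1 - q^m)/(1 - q)`. -/
noncomputable def qint (m : ℕ) : RatFunc ℚ := (1 - q ^ m) / (1 - q)

/-- The q-integer for an integer exponent, `[x; q] = (q^x - 1)/(q - 1)`. -/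
noncomputable def qintZ (x : ℤ) : RatFunc ℚ := (q ^ x - 1) / (q - 1)

/-- The q-factorial `[m]!_q`. -/
noncomputable def qfac (m : ℕ) : RatFunc ℚ := ∏ i ∈ Finset.range m, qint (i + 1)

/-- The Gaussian q-binomial coefficient `[a choose b]_q`, zero when `b < 0` or `b > a`. -/
noncomputable def qbin (a b : ℤ) : RatFunc ℚ :=
  if 0 ≤ b ∧ b ≤ a then qfac a.toNat / (qfac b.toNat * qfac (a - b).toNat) else 0

/-- The first generalized q-binomial coefficient `(n choose p, k)_q`:
`([n]_q/[k]_q) · Σ_{r≥0} [p choose r]_q [n-p choose r]_q [n-r-1 choose k-r-1]_q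
  q^{(n-p)p + r(r-k)}`. -/
noncomputable def gchoose (n p k : ℕ) : RatFunc ℚ :=
  (qint n / qint k) *
    ∑ r ∈ Finset.range (n + 1),
      qbin p r * qbin ((n : ℤ) - p) r * qbin ((n : ℤ) - r - 1) ((k : ℤ) - r - 1) *
        q ^ (((n : ℤ) - p) * p + (r : ℤ) * ((r : ℤ) - k))


/-!
Only `r ≤ n - p` contribute, and for those `r < n`, so at `k = n` the factor
`[n-r-1 choose n-r-1]_q` is `1` and the prefactor `[n]_q/[k]_q` is `1`. With the symmetry
`[p choose r]_q = [p choose p-r]_q` and `(n-p)p + r(r-n) = (n-p-r)(p-r)` the sum becomes the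
q-Vandermonde convolution for `[(n-p)+p choose p]_q`.
-/

theorem q_ne_zero : q ≠ 0 := RatFunc.X_ne_zero

theorem one_sub_q_pow_ne_zero {m : ℕ} (hm : m ≠ 0) : 1 - q ^ m ≠ 0 := by
  rw [q, ← RatFunc.algebraMap_X, ← map_pow, ← map_one (algebraMap (Polynomial ℚ) (RatFunc ℚ)),
    ← map_sub]
  refine RatFunc.algebraMap_ne_zero fun h => ?_
  simpa [Polynomial.coeff_one, hm] using congrArg (Polynomial.coeff · m) h

theorem qint_ne_zero {m : ℕ} (hm : m ≠ 0) : qint m ≠ 0 :=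
  div_ne_zero (one_sub_q_pow_ne_zero hm) (by simpa using one_sub_q_pow_ne_zero one_ne_zero)

theorem qint_add (x y : ℕ) : qint (x + y) = qint x + q ^ x * qint y := by
  rw [qint, qint, qint, mul_div_assoc', ← add_div, pow_add]
  ring

theorem qfac_ne_zero (m : ℕ) : qfac m ≠ 0 :=
  prod_ne_zero_iff.2 fun i _ => qint_ne_zero i.succ_ne_zero

theorem qfac_zero : qfac 0 = 1 := prod_range_zero _

theorem qfac_succ (m : ℕ) : qfac (m + 1) = qfac m * qint (m + 1) := prod_range_succ _ _

theorem qbin_natCast {a b : ℕ} (h : b ≤ a) :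
    qbin a b = qfac a / (qfac b * qfac (a - b)) := by
  rw [qbin, if_pos ⟨b.cast_nonneg, by exact_mod_cast h⟩, ← Nat.cast_sub h]
  simp only [Int.toNat_natCast]

theorem qbin_of_neg (a : ℤ) {b : ℤ} (hb : b < 0) : qbin a b = 0 :=
  if_neg fun h => by omega

theorem qbin_of_lt {a b : ℤ} (h : a < b) : qbin a b = 0 :=
  if_neg fun h' => by omega

theorem qbin_self {a : ℤ} (ha : 0 ≤ a) : qbin a a = 1 := by
  rw [qbin, if_pos ⟨ha, le_rfl⟩, sub_self, Int.toNat_zero, qfac_zero, mul_one,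
    div_self (qfac_ne_zero _)]

theorem qbin_zero_right {a : ℤ} (ha : 0 ≤ a) : qbin a 0 = 1 := by
  rw [qbin, if_pos ⟨le_rfl, ha⟩, sub_zero, Int.toNat_zero, qfac_zero, one_mul,
    div_self (qfac_ne_zero _)]

theorem qbin_sub_right (a b : ℤ) : qbin a (a - b) = qbin a b := by
  by_cases h : 0 ≤ b ∧ b ≤ a
  · rw [qbin, qbin, if_pos (by omega), if_pos h, sub_sub_cancel, mul_comm]
  · rw [qbin, qbin, if_neg (by omega), if_neg h]

theorem qbin_succ_succ {a b : ℕ} (h : b + 1 ≤ a) :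
    qbin ((a : ℤ) + 1) ((b : ℤ) + 1) = qbin a b + q ^ ((b : ℤ) + 1) * qbin a ((b : ℤ) + 1) := by
  obtain ⟨d, rfl⟩ := Nat.exists_eq_add_of_le h
  simp only [← Nat.cast_add_one, zpow_natCast]
  rw [qbin_natCast (by omega), qbin_natCast (by omega), qbin_natCast h,
    show b + 1 + d + 1 - (b + 1) = d + 1 by omega, show b + 1 + d - b = d + 1 by omega,
    Nat.add_sub_cancel_left, qfac_succ (b + 1 + d), qfac_succ b, qfac_succ d,
    show b + 1 + d + 1 = (b + 1) + (d + 1) by omega, qint_add]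
  have := qfac_ne_zero b
  have := qfac_ne_zero d
  have := qint_ne_zero b.succ_ne_zero
  have := qint_ne_zero d.succ_ne_zero
  field_simp

theorem qbin_succ (a : ℕ) (b : ℤ) :
    qbin ((a : ℤ) + 1) b = qbin a (b - 1) + q ^ b * qbin a b := by
  rcases lt_or_ge b 0 with hb | hb
  · rw [qbin_of_neg _ hb, qbin_of_neg _ hb, qbin_of_neg _ (by omega), mul_zero, add_zero]
  lift b to ℕ using hb
  rcases b with _ | c
  · rw [Nat.cast_zero, qbin_zero_right (by omega), qbin_zero_right (by omega),
      qbin_of_neg _ (by norm_num), zpow_zero]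
    ring
  rw [Nat.cast_add_one, add_sub_cancel_right]
  rcases Nat.lt_or_ge c a with hca | hac
  · exact qbin_succ_succ hca
  rcases hac.eq_or_lt with rfl | hac
  · rw [qbin_self (by omega), qbin_self (by omega), qbin_of_lt (by omega), mul_zero, add_zero]
  · rw [qbin_of_lt (by omega), qbin_of_lt (by omega), qbin_of_lt (by omega), mul_zero, add_zero]

theorem qbin_add_eq_sum (m n : ℕ) (k : ℤ) :
    qbin ((m + n : ℕ) : ℤ) k =
      ∑ j ∈ range (m + 1), qbin m j * qbin n (k - j) * q ^ (((m : ℤ) - j) * (k - j)) := by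
  induction m generalizing k with
  | zero => simp [qbin_self]
  | succ m ih =>
    have hlower : ∑ j ∈ range (m + 1 + 1),
        qbin m ((j : ℤ) - 1) * qbin n (k - j) * q ^ (((m : ℤ) + 1 - j) * (k - j)) =
          ∑ j ∈ range (m + 1),
            qbin m j * qbin n (k - 1 - j) * q ^ (((m : ℤ) - j) * (k - 1 - j)) := by
      rw [sum_range_succ', Nat.cast_zero, zero_sub, qbin_of_neg _ neg_one_lt_zero, zero_mul,
        zero_mul, add_zero]
      refine sum_congr rfl fun i _ => ?_
      push_cast
      ring_nf
    have hupper : ∑ j ∈ range (m + 1 + 1),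
        q ^ (j : ℤ) * qbin m j * qbin n (k - j) * q ^ (((m : ℤ) + 1 - j) * (k - j)) =
          q ^ k *
            ∑ j ∈ range (m + 1), qbin m j * qbin n (k - j) * q ^ (((m : ℤ) - j) * (k - j)) := by
      rw [sum_range_succ, qbin_of_lt (by omega), mul_zero, zero_mul, zero_mul, add_zero, mul_sum]
      refine sum_congr rfl fun j _ => ?_
      have hpow : q ^ (j : ℤ) * q ^ (((m : ℤ) + 1 - j) * (k - j)) =
          q ^ k * q ^ (((m : ℤ) - j) * (k - j)) := by
        rw [← zpow_add₀ q_ne_zero, ← zpow_add₀ q_ne_zero]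
        congr 1
        ring
      linear_combination qbin m j * qbin n (k - j) * hpow
    rw [show m + 1 + n = m + n + 1 by omega, Nat.cast_add_one, qbin_succ, ih, ih]
    simp only [Nat.cast_add_one, qbin_succ, add_mul, sum_add_distrib, hlower, hupper]

theorem gchoose_k_eq_n (n p : ℕ) (hn : 0 < n) (hp : 0 < p) (hpn : p ≤ n) :
    gchoose n p n = qbin n p := by
  obtain ⟨m, rfl⟩ := Nat.exists_eq_add_of_le' hpn
  have hm : ((m + p : ℕ) : ℤ) - p = m := by push_cast; ring
  have hvanish : ∀ r ∈ range (m + p + 1), r ∉ range (m + 1) →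
      qbin p r * qbin m r * qbin (((m + p : ℕ) : ℤ) - r - 1) (((m + p : ℕ) : ℤ) - r - 1) *
        q ^ ((m : ℤ) * p + r * (r - (m + p : ℕ))) = 0 := by
    intro r _ hr
    rw [qbin_of_lt (a := m) (by rw [mem_range] at hr; omega), mul_zero, zero_mul, zero_mul]
  have hterm : ∀ r ∈ range (m + 1),
      qbin p r * qbin m r * qbin (((m + p : ℕ) : ℤ) - r - 1) (((m + p : ℕ) : ℤ) - r - 1) *
        q ^ ((m : ℤ) * p + r * (r - (m + p : ℕ))) =
      qbin m r * qbin p (p - r) * q ^ (((m : ℤ) - r) * (p - r)) := by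
    intro r hr
    have hr : r < m + p := by rw [mem_range] at hr; omega
    rw [qbin_self (a := ((m + p : ℕ) : ℤ) - r - 1) (by omega), qbin_sub_right]
    push_cast
    ring_nf
  rw [gchoose, div_self (qint_ne_zero hn.ne'), one_mul, hm,
    ← sum_subset (range_subset_range.2 (by omega : m + 1 ≤ m + p + 1)) hvanish,
    sum_congr rfl hterm, qbin_add_eq_sum]
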